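/- arXiv:1011.1727 — 2 statements merged into one kernel-verified Lean document; each statement's English description precedes it below -/
import Mathlib

section
/- Let $b_1,\ldots,b_m$ be real numbers with $\sum_{i=1}^m b_i = 0$. Then $\left|\sum_{i=1}^m b_i^3\right| \le \frac{m-2}{\sqrt{m(m-1)}}\left(\sum_{i=1}^m b_i^2\right)^{3/2}$. -/
/-!
Write `s = ∑ bᵢ²` and `t = √(s / (m (m - 1)))`. Since the `bᵢ` sum to zero, Cauchy–Schwarz applied to
the other `m - 1` terms gives `m bᵢ² ≤ (m - 1) s`, i.e. every `bᵢ ≤ (m - 1) t`. For `x ≤ p` the cubic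
`(p - x) (x - q)²` is nonnegative; with `p = (m - 1) t` and `q = -t` (the extremal configuration:
one entry `(m - 1) t`, all others `-t`) summing it over the `bᵢ` yields `∑ bᵢ³ ≤ (m - 2) t s`, which is
the upper bound. Applying it to `-b` gives the lower bound.
-/

open Finset

variable {ι : Type*} [Fintype ι]

theorem card_mul_sq_le_of_sum_eq_zero {b : ι → ℝ} (hsum : ∑ i, b i = 0) (i : ι) :
    Fintype.card ι * b i ^ 2 ≤ (Fintype.card ι - 1) * ∑ j, b j ^ 2 := by
  classical
  have hrest : ∑ j ∈ univ.erase i, b j = -b i := by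
    linarith [add_sum_erase univ b (mem_univ i)]
  have hrest_sq : ∑ j ∈ univ.erase i, b j ^ 2 = ∑ j, b j ^ 2 - b i ^ 2 := by
    linarith [add_sum_erase univ (fun j => b j ^ 2) (mem_univ i)]
  have hcs := sq_sum_le_card_mul_sum_sq (s := univ.erase i) (f := b)
  rw [hrest, hrest_sq, card_erase_of_mem (mem_univ i), card_univ,
    Nat.cast_sub (Fintype.card_pos_iff.2 ⟨i⟩)] at hcs
  push_cast at hcs
  linarith

theorem sum_cube_le_of_sum_eq_zero_of_forall_le {b : ι → ℝ} (hsum : ∑ i, b i = 0) {p : ℝ}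
    (hp : ∀ i, b i ≤ p) (q : ℝ) :
    ∑ i, b i ^ 3 ≤ (p + 2 * q) * ∑ i, b i ^ 2 + Fintype.card ι * (p * q ^ 2) := by
  have hcubic (i : ι) :
      b i ^ 3 ≤ (p + 2 * q) * b i ^ 2 - (q ^ 2 + 2 * p * q) * b i + p * q ^ 2 := by
    nlinarith [mul_nonneg (sub_nonneg.2 (hp i)) (sq_nonneg (b i - q))]
  calc ∑ i, b i ^ 3
      ≤ ∑ i, ((p + 2 * q) * b i ^ 2 - (q ^ 2 + 2 * p * q) * b i + p * q ^ 2) :=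
        sum_le_sum fun i _ => hcubic i
    _ = (p + 2 * q) * ∑ i, b i ^ 2 + Fintype.card ι * (p * q ^ 2) := by
        simp only [sum_add_distrib, sum_sub_distrib, ← mul_sum, hsum, sum_const, card_univ,
          nsmul_eq_mul]
        ring

theorem sum_cube_le_of_sum_eq_zero (hcard : 2 ≤ Fintype.card ι) {b : ι → ℝ}
    (hsum : ∑ i, b i = 0) :
    ∑ i, b i ^ 3 ≤ ((Fintype.card ι : ℝ) - 2) / √(Fintype.card ι * (Fintype.card ι - 1)) *
      (∑ i, b i ^ 2) ^ ((3 : ℝ) / 2) := by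
  have hn : (2 : ℝ) ≤ Fintype.card ι := by exact_mod_cast hcard
  set n : ℝ := (Fintype.card ι : ℝ)
  set s := ∑ i, b i ^ 2
  have hs : 0 ≤ s := sum_nonneg fun i _ => sq_nonneg (b i)
  have hn1 : 0 < n - 1 := by linarith
  have hnn : 0 < n * (n - 1) := by positivity
  set t := √s / √(n * (n - 1)) with ht_def
  have ht : 0 ≤ t := by positivity
  have ht_sq : n * (n - 1) * t ^ 2 = s := by
    rw [div_pow, Real.sq_sqrt hs, Real.sq_sqrt hnn.le]
    field_simp
  have hb (i : ι) : b i ≤ (n - 1) * t := by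
    refine (abs_le_of_sq_le_sq' ?_ (by nlinarith)).2
    have hbi : n * b i ^ 2 ≤ (n - 1) * s := card_mul_sq_le_of_sum_eq_zero hsum i
    have : n * b i ^ 2 ≤ n * ((n - 1) * t) ^ 2 := by linear_combination hbi - (n - 1) * ht_sq
    exact le_of_mul_le_mul_left this (by linarith)
  have hrhs : (n - 2) / √(n * (n - 1)) * s ^ ((3 : ℝ) / 2) = (n - 2) * t * s := by
    have hcube : √s ^ 3 = √s * s := by rw [pow_succ', Real.sq_sqrt hs]
    rw [Real.rpow_div_two_eq_sqrt _ hs, show ((3 : ℝ)) = (3 : ℕ) by norm_num, Real.rpow_natCast,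
      hcube, ht_def]
    ring
  calc ∑ i, b i ^ 3 ≤ ((n - 1) * t + 2 * -t) * s + n * ((n - 1) * t * (-t) ^ 2) :=
        sum_cube_le_of_sum_eq_zero_of_forall_le hsum hb (-t)
    _ = (n - 2) / √(n * (n - 1)) * s ^ ((3 : ℝ) / 2) := by
        rw [hrhs]
        linear_combination t * ht_sq

theorem abs_sum_cube_le_of_sum_eq_zero (hcard : 2 ≤ Fintype.card ι) {b : ι → ℝ}
    (hsum : ∑ i, b i = 0) :
    |∑ i, b i ^ 3| ≤ ((Fintype.card ι : ℝ) - 2) / √(Fintype.card ι * (Fintype.card ι - 1)) *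
      (∑ i, b i ^ 2) ^ ((3 : ℝ) / 2) := by
  have hneg := sum_cube_le_of_sum_eq_zero hcard (b := -b) (by simp [hsum])
  simp only [Pi.neg_apply, neg_sq, Odd.neg_pow (by decide : Odd 3), sum_neg_distrib] at hneg
  exact abs_le.2 ⟨neg_le.1 hneg, sum_cube_le_of_sum_eq_zero hcard hsum⟩

/-- Okumura Lemma (inequality part). -/
theorem okumura_inequality (m : ℕ) (hm : 2 ≤ m) (b : Fin m → ℝ)
    (hsum : ∑ i, b i = 0) :
    |∑ i, (b i) ^ 3| ≤
      ((m : ℝ) - 2) / Real.sqrt (m * (m - 1)) * (∑ i, (b i) ^ 2) ^ ((3 : ℝ) / 2) := by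
  simpa using abs_sum_cube_le_of_sum_eq_zero (by simpa using hm) hsum
end

section
/- Let $b_1,\ldots,b_m$ be real numbers with $\sum_{i=1}^m b_i = 0$. Equality $\sum_{i=1}^m b_i^3 = \frac{m-2}{\sqrt{m(m-1)}}\left(\sum_{i=1}^m b_i^2\right)^{3/2}$ holds if and only if $m-1$ of the $b_i$'s are nonpositive and equal to each other. -/
/-!
Put `n` for the number of terms and `u = √(∑ bᵢ² / (n (n - 1)))`. Because `∑ bᵢ = 0`,
`∑ bᵢ³ - (n - 2) n (n - 1) u³ = ∑ (bᵢ + u)² (bᵢ - (n - 1) u)`, and Cauchy–Schwarz applied to the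
other `n - 1` terms gives `bᵢ ≤ (n - 1) u`. Every summand on the right is therefore nonpositive,
so equality holds iff each `bᵢ` is `-u` or `(n - 1) u`. Since `∑ (bᵢ + u) = n u`, at most one
`bᵢ` takes the second value when `u ≠ 0`.
-/

open Finset

namespace Okumura

variable {ι : Type*} [Fintype ι] {b : ι → ℝ} {u c : ℝ}

theorem card_mul_sq_le_sub_one_mul_of_sum_eq_zero (hsum : ∑ i, b i = 0) (i : ι) :
    Fintype.card ι * b i ^ 2 ≤ (Fintype.card ι - 1) * ∑ j, b j ^ 2 := by
  classical
  have hrest : ∑ j ∈ univ.erase i, b j = -b i := by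
    linarith [add_sum_erase univ b (mem_univ i)]
  have hsq : ∑ j, b j ^ 2 = b i ^ 2 + ∑ j ∈ univ.erase i, b j ^ 2 :=
    (add_sum_erase univ (fun j => b j ^ 2) (mem_univ i)).symm
  have hcard : (#(univ.erase i) : ℝ) = Fintype.card ι - 1 := by
    rw [card_erase_of_mem (mem_univ i), card_univ, Nat.cast_pred (Fintype.card_pos_iff.2 ⟨i⟩)]
  have hcs := sq_sum_le_card_mul_sum_sq (s := univ.erase i) (f := b)
  rw [hrest, hcard, neg_sq] at hcs
  rw [hsq]
  linear_combination hcs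

theorem le_sub_one_mul_of_sum_eq_zero (hsum : ∑ i, b i = 0) (hu : 0 ≤ u)
    (hB : ∑ i, b i ^ 2 = Fintype.card ι * (Fintype.card ι - 1) * u ^ 2) (i : ι) :
    b i ≤ (Fintype.card ι - 1) * u := by
  have hn : (1 : ℝ) ≤ Fintype.card ι := by
    exact_mod_cast Fintype.card_pos_iff.2 ⟨i⟩
  have h := card_mul_sq_le_sub_one_mul_of_sum_eq_zero hsum i
  rw [hB] at h
  have hsq : b i ^ 2 ≤ ((Fintype.card ι - 1) * u) ^ 2 := by
    refine le_of_mul_le_mul_left ?_ (by linarith : (0 : ℝ) < Fintype.card ι)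
    linear_combination h
  exact (abs_le_of_sq_le_sq' hsq (mul_nonneg (by linarith) hu)).2

theorem sum_pow_three_sub_eq (hsum : ∑ i, b i = 0)
    (hB : ∑ i, b i ^ 2 = Fintype.card ι * (Fintype.card ι - 1) * u ^ 2) :
    ∑ i, b i ^ 3 - (Fintype.card ι - 2) * (Fintype.card ι * (Fintype.card ι - 1)) * u ^ 3 =
      ∑ i, (b i + u) ^ 2 * (b i - (Fintype.card ι - 1) * u) := by
  have hexpand : ∀ i, (b i + u) ^ 2 * (b i - (Fintype.card ι - 1) * u) =
      b i ^ 3 + (3 - Fintype.card ι) * u * b i ^ 2 + (3 - 2 * Fintype.card ι) * u ^ 2 * b i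
        - (Fintype.card ι - 1) * u ^ 3 := fun i => by ring
  simp only [hexpand, sum_add_distrib, sum_sub_distrib, ← mul_sum, sum_const, card_univ,
    nsmul_eq_mul, hsum, hB]
  ring

theorem sum_pow_three_eq_iff (hsum : ∑ i, b i = 0) (hu : 0 ≤ u)
    (hB : ∑ i, b i ^ 2 = Fintype.card ι * (Fintype.card ι - 1) * u ^ 2) :
    ∑ i, b i ^ 3 = (Fintype.card ι - 2) * (Fintype.card ι * (Fintype.card ι - 1)) * u ^ 3 ↔
      ∀ i, b i = -u ∨ b i = (Fintype.card ι - 1) * u := by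
  rw [← sub_eq_zero, sum_pow_three_sub_eq hsum hB, sum_eq_zero_iff_of_nonpos]
  · simp only [mem_univ, true_imp_iff, mul_eq_zero, pow_eq_zero_iff two_ne_zero,
      add_eq_zero_iff_eq_neg, sub_eq_zero]
  · exact fun i _ => mul_nonpos_of_nonneg_of_nonpos (sq_nonneg _)
      (sub_nonpos.2 (le_sub_one_mul_of_sum_eq_zero hsum hu hB i))

theorem exists_forall_ne_eq_neg [Nonempty ι] (hsum : ∑ i, b i = 0)
    (h : ∀ i, b i = -u ∨ b i = (Fintype.card ι - 1) * u) :
    ∃ j, ∀ i ≠ j, b i = -u := by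
  classical
  rcases eq_or_ne u 0 with rfl | hu0
  · exact ⟨Classical.arbitrary ι, fun i _ => by rcases h i with hi | hi <;> simp [hi]⟩
  set T := univ.filter fun i => b i ≠ -u
  have hT : ∀ i ∈ T, b i + u = Fintype.card ι * u := fun i hi => by
    rcases h i with hneg | hpos
    · exact absurd hneg (mem_filter.1 hi).2
    · rw [hpos]; ring
  have hcount : (#T : ℝ) * (Fintype.card ι * u) = 1 * (Fintype.card ι * u) :=
    calc (#T : ℝ) * (Fintype.card ι * u) = ∑ i ∈ T, (b i + u) := by
          rw [sum_congr rfl hT, sum_const, nsmul_eq_mul]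
      _ = ∑ i, (b i + u) := sum_filter_of_ne fun i _ hi => by
          simpa [T, eq_neg_iff_add_eq_zero] using hi
      _ = 1 * (Fintype.card ι * u) := by
          rw [sum_add_distrib, hsum, sum_const, card_univ, nsmul_eq_mul]; ring
  have hn : (Fintype.card ι : ℝ) ≠ 0 := by exact_mod_cast Fintype.card_ne_zero
  obtain ⟨j, hj⟩ := card_eq_one.1 (by exact_mod_cast mul_right_cancel₀ (mul_ne_zero hn hu0) hcount)
  refine ⟨j, fun i hij => not_not.1 fun hne => hij ?_⟩
  have hiT : i ∈ T := mem_filter.2 ⟨mem_univ i, hne⟩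
  rwa [hj, mem_singleton] at hiT

theorem sum_comp_eq_of_forall_ne_eq (f : ℝ → ℝ) {j : ι} (hbc : ∀ i ≠ j, b i = c) :
    ∑ i, f (b i) = f (b j) + (Fintype.card ι - 1) * f c := by
  classical
  rw [← add_sum_erase _ _ (mem_univ j),
    sum_congr rfl fun i hi => by rw [hbc i (ne_of_mem_erase hi)], sum_const,
    card_erase_of_mem (mem_univ j), card_univ, nsmul_eq_mul,
    Nat.cast_pred (Fintype.card_pos_iff.2 ⟨j⟩)]

theorem forall_eq_neg_or_eq_of_forall_ne_eq (hn : 1 < Fintype.card ι) (hsum : ∑ i, b i = 0)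
    (hu : 0 ≤ u) (hB : ∑ i, b i ^ 2 = Fintype.card ι * (Fintype.card ι - 1) * u ^ 2)
    (hc : c ≤ 0) {j : ι} (hbc : ∀ i ≠ j, b i = c) :
    ∀ i, b i = -u ∨ b i = (Fintype.card ι - 1) * u := by
  have hbj : b j = -((Fintype.card ι - 1) * c) := by
    have hlin := sum_comp_eq_of_forall_ne_eq id hbc
    simp only [id, hsum] at hlin
    linarith
  have hsq := sum_comp_eq_of_forall_ne_eq (· ^ 2) hbc
  simp only [hB, hbj] at hsq
  have hn' : (1 : ℝ) < Fintype.card ι := by exact_mod_cast hn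
  have hM : (0 : ℝ) < Fintype.card ι * (Fintype.card ι - 1) := mul_pos (by linarith) (by linarith)
  have huc : u = -c :=
    (sq_eq_sq₀ hu (neg_nonneg.2 hc)).1 (mul_left_cancel₀ hM.ne' (by linear_combination hsq))
  intro i
  rcases eq_or_ne i j with rfl | hij
  · right; rw [hbj, huc]; ring
  · left; rw [hbc i hij, huc, neg_neg]

theorem forall_eq_neg_or_eq_iff (hn : 1 < Fintype.card ι) (hsum : ∑ i, b i = 0) (hu : 0 ≤ u)
    (hB : ∑ i, b i ^ 2 = Fintype.card ι * (Fintype.card ι - 1) * u ^ 2) :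
    (∀ i, b i = -u ∨ b i = (Fintype.card ι - 1) * u) ↔ ∃ c ≤ 0, ∃ j, ∀ i ≠ j, b i = c := by
  have : Nonempty ι := Fintype.card_pos_iff.1 (by omega)
  constructor
  · exact fun h => ⟨-u, neg_nonpos.2 hu, exists_forall_ne_eq_neg hsum h⟩
  · rintro ⟨c, hc, j, hbc⟩
    exact forall_eq_neg_or_eq_of_forall_ne_eq hn hsum hu hB hc hbc

theorem exists_card_eq_card_sub_one_iff [Nonempty ι] {p : ι → Prop} :
    (∃ s : Finset ι, #s = Fintype.card ι - 1 ∧ ∀ i ∈ s, p i) ↔ ∃ j, ∀ i ≠ j, p i := by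
  classical
  constructor
  · rintro ⟨s, hs, hp⟩
    have : #sᶜ = 1 := by
      rw [card_compl, hs]; have := Fintype.card_pos (α := ι); omega
    obtain ⟨j, hj⟩ := card_eq_one.1 this
    refine ⟨j, fun i hij => hp i (not_not.1 fun his => hij ?_)⟩
    simpa [hj] using mem_compl.2 his
  · rintro ⟨j, hp⟩
    exact ⟨univ.erase j, by rw [card_erase_of_mem (mem_univ j), card_univ],
      fun i hi => hp i (ne_of_mem_erase hi)⟩

theorem div_sqrt_mul_rpow_three_halves (a : ℝ) {M u : ℝ} (hM : 0 < M) (hu : 0 ≤ u) :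
    a / √M * (M * u ^ 2) ^ ((3 : ℝ) / 2) = a * M * u ^ 3 := by
  have hMu : 0 ≤ M * u ^ 2 := by positivity
  have hpow : (M * u ^ 2) ^ ((3 : ℝ) / 2) = M * u ^ 2 * √(M * u ^ 2) := by
    rw [Real.sqrt_eq_rpow, ← Real.rpow_one_add' hMu (by norm_num)]; norm_num
  have hsqrt : √(M * u ^ 2) = √M * u := by rw [Real.sqrt_mul hM.le, Real.sqrt_sq hu]
  have hsM : √M ≠ 0 := (Real.sqrt_pos.2 hM).ne'
  rw [hpow, hsqrt]
  field_simp

end Okumura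

open Okumura in
/-- Okumura Lemma (equality case of the right-hand inequality):
equality holds iff `m - 1` of the `b i`'s are nonpositive and equal. -/
theorem okumura_equality (m : ℕ) (hm : 2 ≤ m) (b : Fin m → ℝ)
    (hsum : ∑ i, b i = 0) :
    (∑ i, (b i) ^ 3 =
        ((m : ℝ) - 2) / Real.sqrt (m * (m - 1)) * (∑ i, (b i) ^ 2) ^ ((3 : ℝ) / 2)) ↔
      ∃ (c : ℝ) (s : Finset (Fin m)), c ≤ 0 ∧ s.card = m - 1 ∧ ∀ i ∈ s, b i = c := by
  have hM : (0 : ℝ) < m * (m - 1) := by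
    have : (2 : ℝ) ≤ m := by exact_mod_cast hm
    nlinarith
  set u := √((∑ i, b i ^ 2) / (m * (m - 1)))
  have hu : 0 ≤ u := Real.sqrt_nonneg _
  have hB : ∑ i, b i ^ 2 = m * (m - 1) * u ^ 2 := by
    rw [Real.sq_sqrt (div_nonneg (sum_nonneg fun i _ => sq_nonneg (b i)) hM.le),
      mul_div_cancel₀ _ hM.ne']
  have hn : 1 < Fintype.card (Fin m) := by rw [Fintype.card_fin]; omega
  have hB' : ∑ i, b i ^ 2 = Fintype.card (Fin m) * (Fintype.card (Fin m) - 1) * u ^ 2 := by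
    rwa [Fintype.card_fin]
  have key := (sum_pow_three_eq_iff hsum hu hB').trans (forall_eq_neg_or_eq_iff hn hsum hu hB')
  have : Nonempty (Fin m) := ⟨⟨0, by omega⟩⟩
  simp only [Fintype.card_fin, ← exists_card_eq_card_sub_one_iff] at key
  rw [hB, div_sqrt_mul_rpow_three_halves _ hM hu, key]
  simp only [exists_and_left]
end
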